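/- arXiv:gr-qc/9609070 — 7 statements merged into one kernel-verified Lean document; each statement's English description precedes it below -/
import Mathlib

section
/- Let k ∈ (0,1] and let Δ = 2π(1−k) be the deficit angle of the cosmic string metric. The following are equivalent: (i) for every l ∈ ℤ and all ε, β ∈ ℝ there exists a C^∞ function G : ℝ⁵ → ℂ such that G(t, ρ·cos φ, ρ·sin φ, z, ρ) = exp(−iεt)·exp(iβz)·exp(ilφ)·ρ^(|l|/k) for all t, z, φ ∈ ℝ and all ρ ≥ 0; (ii) there exists n ∈ ℕ, n ≥ 1, such that Δ = 2π(1 − 1/n). (Theorem: the conical space-time of a cosmic string can be a background of an asymptotically smooth Klein–Gordon scalar field only for the discrete spectrum of deficit angles Δ = 2π(1 − 1/n).) -/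
open Real Complex

/-- Iterated-derivative induction: if a smooth `g` equals `ρ ^ a` on `(0,∞)`, then for each
`m < a` some smooth function equals `c * ρ ^ (a - m)` on `(0,∞)` with `c > 0`. -/
lemma aux_ind (a : ℝ) (g : ℝ → ℝ) (hg : ContDiff ℝ ((⊤:ℕ∞) : WithTop ℕ∞) g)
    (heq : ∀ ρ : ℝ, 0 < ρ → g ρ = ρ ^ a) :
    ∀ m : ℕ, (m : ℝ) < a → ∃ c : ℝ, 0 < c ∧ ∃ h : ℝ → ℝ,
      ContDiff ℝ ((⊤:ℕ∞) : WithTop ℕ∞) h ∧ ∀ ρ : ℝ, 0 < ρ → h ρ = c * ρ ^ (a - m) := by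
  intro m
  induction m with
  | zero =>
    intro _
    exact ⟨1, one_pos, g, hg, fun ρ hρ => by simpa using heq ρ hρ⟩
  | succ m ih =>
    intro hma
    have hm : (m : ℝ) < a := lt_trans (by exact_mod_cast Nat.lt_succ_self m) hma
    obtain ⟨c, hc, h, hh, hhe⟩ := ih hm
    refine ⟨c * (a - m), mul_pos hc (by linarith), deriv h,
      (contDiff_infty_iff_deriv.mp hh).2, fun ρ hρ => ?_⟩
    have hev : h =ᶠ[nhds ρ] fun x => c * x ^ (a - m) := by
      filter_upwards [Ioi_mem_nhds hρ] with x hx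
      exact hhe x hx
    have hd : HasDerivAt (fun x : ℝ => c * x ^ (a - m)) (c * ((a - m) * ρ ^ (a - m - 1))) ρ :=
      (Real.hasDerivAt_rpow_const (Or.inl (ne_of_gt hρ))).const_mul c
    rw [hev.deriv_eq, hd.deriv]
    have : a - m - 1 = a - (m + 1 : ℕ) := by push_cast; ring
    rw [this]; ring

/-- No smooth function on `ℝ` can agree with `ρ ^ a` on `(0,∞)` when `a ≥ 1` is not a
natural number. -/
lemma no_smooth_ext (a : ℝ) (ha1 : 1 ≤ a) (ha : ∀ N : ℕ, a ≠ N) (g : ℝ → ℝ)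
    (hg : ContDiff ℝ ((⊤:ℕ∞) : WithTop ℕ∞) g)
    (heq : ∀ ρ : ℝ, 0 < ρ → g ρ = ρ ^ a) : False := by
  set m := ⌊a⌋₊ with hmdef
  have ha0 : (0:ℝ) ≤ a := by linarith
  have hne : (m : ℝ) ≠ a := fun h2 => ha m h2.symm
  have hm : (m : ℝ) < a := lt_of_le_of_ne (Nat.floor_le ha0) hne
  obtain ⟨c, hc, h, hh, hhe⟩ := aux_ind a g hg heq m hm
  set b := a - m with hbdef
  have hb0 : 0 < b := by simpa [hbdef] using hm
  have hb1 : b < 1 := by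
    have := Nat.lt_floor_add_one a
    simp only [hbdef]; push_cast at this ⊢; linarith
  -- h 0 = 0
  have hcont : Filter.Tendsto h (nhdsWithin 0 (Set.Ioi 0)) (nhds (h 0)) :=
    (hh.continuous.continuousAt).continuousWithinAt
  have htend0 : Filter.Tendsto h (nhdsWithin 0 (Set.Ioi 0)) (nhds 0) := by
    have hrp : Filter.Tendsto (fun ρ : ℝ => c * ρ ^ b) (nhdsWithin 0 (Set.Ioi 0)) (nhds 0) := by
      have : Filter.Tendsto (fun ρ : ℝ => ρ ^ b) (nhds 0) (nhds ((0:ℝ) ^ b)) :=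
        (Real.continuousAt_rpow_const 0 b (Or.inr hb0.le)).tendsto
      rw [Real.zero_rpow (ne_of_gt hb0)] at this
      simpa using (this.const_mul c).mono_left nhdsWithin_le_nhds
    exact hrp.congr' (Filter.eventuallyEq_of_mem self_mem_nhdsWithin
      (fun ρ hρ => (hhe ρ hρ).symm))
  have h0 : h 0 = 0 := tendsto_nhds_unique hcont htend0
  -- slope tends to deriv h 0
  have hdiff : HasDerivAt h (deriv h 0) 0 :=
    ((hh.differentiable (by simp)) 0).hasDerivAt
  have hslope : Filter.Tendsto (slope h 0) (nhdsWithin 0 (Set.Ioi 0)) (nhds (deriv h 0)) :=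
    (hasDerivAt_iff_tendsto_slope.mp hdiff).mono_left
      (nhdsWithin_mono 0 (fun x hx => ne_of_gt hx))
  -- but slope tends to atTop
  have hatTop : Filter.Tendsto (slope h 0) (nhdsWithin 0 (Set.Ioi 0)) Filter.atTop := by
    have key : Filter.Tendsto (fun ρ : ℝ => c * ρ ^ (b - 1)) (nhdsWithin 0 (Set.Ioi 0))
        Filter.atTop := by
      have h1 : Filter.Tendsto (fun ρ : ℝ => (ρ⁻¹) ^ (1 - b)) (nhdsWithin 0 (Set.Ioi 0))
          Filter.atTop :=
        (tendsto_rpow_atTop (by linarith)).comp tendsto_inv_nhdsGT_zero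
      have h2 : Filter.Tendsto (fun ρ : ℝ => ρ ^ (b - 1)) (nhdsWithin 0 (Set.Ioi 0))
          Filter.atTop := by
        refine h1.congr' (Filter.eventuallyEq_of_mem self_mem_nhdsWithin (fun ρ hρ => ?_))
        rw [Real.inv_rpow hρ.le, ← Real.rpow_neg hρ.le, neg_sub]
      exact h2.const_mul_atTop hc
    refine key.congr' (Filter.eventuallyEq_of_mem self_mem_nhdsWithin (fun ρ hρ => ?_))
    have hρ' : (0:ℝ) < ρ := hρ
    rw [slope_def_field, hhe ρ hρ', h0]
    rw [sub_zero, sub_zero, Real.rpow_sub hρ', Real.rpow_one]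
    ring
  exact not_tendsto_nhds_of_tendsto_atTop hatTop _ hslope

/-- The prolonged normal mode written in Cartesian form is smooth (indeed analytic) on `ℝ⁵`. -/
lemma contDiff_mode (ε β : ℝ) (m q : ℕ) (s : ℂ) :
    ContDiff ℝ (⊤ : ℕ∞) (fun p : ℝ × ℝ × ℝ × ℝ × ℝ =>
      Complex.exp (-((ε : ℂ) * (p.1 : ℂ)) * Complex.I) *
      Complex.exp ((β : ℂ) * (p.2.2.2.1 : ℂ) * Complex.I) *
      (((p.2.1 : ℂ)) + ((p.2.2.1 : ℂ)) * s) ^ m * ((p.2.2.2.2 : ℂ)) ^ q) := by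
  have c1 : ContDiff ℝ (⊤ : ℕ∞) (fun p : ℝ × ℝ × ℝ × ℝ × ℝ => (p.1 : ℂ)) :=
    Complex.ofRealCLM.contDiff.comp contDiff_fst
  have c2 : ContDiff ℝ (⊤ : ℕ∞) (fun p : ℝ × ℝ × ℝ × ℝ × ℝ => (p.2.1 : ℂ)) :=
    Complex.ofRealCLM.contDiff.comp (contDiff_fst.comp contDiff_snd)
  have c3 : ContDiff ℝ (⊤ : ℕ∞) (fun p : ℝ × ℝ × ℝ × ℝ × ℝ => (p.2.2.1 : ℂ)) :=
    Complex.ofRealCLM.contDiff.comp (contDiff_fst.comp (contDiff_snd.comp contDiff_snd))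
  have c4 : ContDiff ℝ (⊤ : ℕ∞) (fun p : ℝ × ℝ × ℝ × ℝ × ℝ => (p.2.2.2.1 : ℂ)) :=
    Complex.ofRealCLM.contDiff.comp
      (contDiff_fst.comp (contDiff_snd.comp (contDiff_snd.comp contDiff_snd)))
  have c5 : ContDiff ℝ (⊤ : ℕ∞) (fun p : ℝ × ℝ × ℝ × ℝ × ℝ => (p.2.2.2.2 : ℂ)) :=
    Complex.ofRealCLM.contDiff.comp
      (contDiff_snd.comp (contDiff_snd.comp (contDiff_snd.comp contDiff_snd)))
  have e1 : ContDiff ℝ (⊤ : ℕ∞) (fun p : ℝ × ℝ × ℝ × ℝ × ℝ =>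
      Complex.exp (-((ε : ℂ) * (p.1 : ℂ)) * Complex.I)) :=
    Complex.contDiff_exp.comp (((contDiff_const.mul c1).neg).mul contDiff_const)
  have e2 : ContDiff ℝ (⊤ : ℕ∞) (fun p : ℝ × ℝ × ℝ × ℝ × ℝ =>
      Complex.exp ((β : ℂ) * (p.2.2.2.1 : ℂ) * Complex.I)) :=
    Complex.contDiff_exp.comp ((contDiff_const.mul c4).mul contDiff_const)
  exact ((e1.mul e2).mul ((c2.add (c3.mul contDiff_const)).pow m)).mul (c5.pow q)

/-- Surface identity: `(ρ e^{±iφ})^m ρ^{m(n-1)} = e^{±imφ} ρ^{mn}`. -/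
lemma surface_id (φ ρ : ℝ) (hρ : 0 ≤ ρ) (m n' : ℕ) (sgn : ℂ) (hs : sgn = 1 ∨ sgn = -1) :
    (((ρ * Real.cos φ : ℝ) : ℂ) + ((ρ * Real.sin φ : ℝ) : ℂ) * (sgn * Complex.I)) ^ m *
      ((ρ : ℝ) : ℂ) ^ (m * n') =
    Complex.exp (sgn * (m : ℂ) * (φ : ℂ) * Complex.I) * ((ρ ^ (m * (n' + 1) : ℕ) : ℝ) : ℂ) := by
  have key : ((ρ * Real.cos φ : ℝ) : ℂ) + ((ρ * Real.sin φ : ℝ) : ℂ) * (sgn * Complex.I) =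
      (ρ : ℂ) * Complex.exp (sgn * (φ : ℂ) * Complex.I) := by
    rcases hs with h | h <;> subst h
    · have h1 : (1:ℂ) * ((φ:ℂ) * Complex.I) = (φ:ℂ) * Complex.I := by ring
      rw [mul_assoc, h1, Complex.exp_mul_I]
      push_cast
      ring
    · have h1 : (-1:ℂ) * ((φ:ℂ) * Complex.I) = (-(φ:ℂ)) * Complex.I := by ring
      rw [mul_assoc, h1, Complex.exp_mul_I]
      push_cast
      simp only [Complex.cos_neg, Complex.sin_neg]
      ring
  rw [key, mul_pow, ← Complex.exp_nat_mul]
  push_cast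
  have hexp : ((m:ℂ)) * (sgn * (φ:ℂ) * Complex.I) = sgn * (m:ℂ) * (φ:ℂ) * Complex.I := by ring
  have hn : m + m * n' = m * (n' + 1) := by ring
  rw [hexp, ← hn, pow_add]
  ring

/-- The conical space-time of a cosmic string (realized as the subset
`{(t, ρcosφ, ρsinφ, z, ρ)} ⊂ ℝ⁵`, with metric parameter `k ∈ (0,1]` and deficit angle
`Δ = 2π(1−k)`) can be a background of an asymptotically smooth Klein–Gordon scalar field —
i.e. every prolonged normal mode `exp(−iεt)·exp(iβz)·exp(ilφ)·ρ^(|l|/k)` extends to a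
`C^∞` function on `ℝ⁵` — exactly for the discrete spectrum of deficit angles
`Δ = 2π(1 − 1/n)`, `n = 1, 2, …`. -/
theorem cosmic_string_scalar_asymptotically_smooth_iff
    (k : ℝ) (hk0 : 0 < k) (hk1 : k ≤ 1) (Δ : ℝ) (hΔ : Δ = 2 * π * (1 - k)) :
    (∀ l : ℤ, ∀ ε β : ℝ, ∃ G : ℝ × ℝ × ℝ × ℝ × ℝ → ℂ, ContDiff ℝ (⊤ : ℕ∞) G ∧
        ∀ t z φ ρ : ℝ, 0 ≤ ρ →
          G (t, ρ * Real.cos φ, ρ * Real.sin φ, z, ρ) =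
            Complex.exp (-((ε : ℂ) * (t : ℂ)) * Complex.I) *
            Complex.exp ((β : ℂ) * (z : ℂ) * Complex.I) *
            Complex.exp ((l : ℂ) * (φ : ℂ) * Complex.I) *
            ((ρ ^ (|(l : ℝ)| / k) : ℝ) : ℂ)) ↔
      ∃ n : ℕ, 1 ≤ n ∧ Δ = 2 * π * (1 - 1 / (n : ℝ)) := by
  constructor
  · intro h
    by_contra hcon
    push_neg at hcon
    obtain ⟨G, hG, hGeq⟩ := h 1 0 0
    have ha1 : 1 ≤ 1 / k := one_le_one_div hk0 hk1
    have haN : ∀ N : ℕ, 1 / k ≠ (N : ℝ) := by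
      intro N hN
      have hN1 : 1 ≤ N := by
        by_contra hh
        push_neg at hh
        interval_cases N
        · rw [hN] at ha1; norm_num at ha1
      refine hcon N hN1 ?_
      have hk' : k = 1 / (N : ℝ) := by rw [← hN, one_div_one_div]
      rw [hΔ, hk']
    set g : ℝ → ℝ := fun s => (G (0, s, 0, 0, s)).re with hgdef
    have hι : ContDiff ℝ ((⊤:ℕ∞) : WithTop ℕ∞)
        (fun s : ℝ => ((0:ℝ), s, (0:ℝ), (0:ℝ), s)) :=
      contDiff_const.prodMk (contDiff_id.prodMk (contDiff_const.prodMk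
        (contDiff_const.prodMk contDiff_id)))
    have hsm : ContDiff ℝ ((⊤:ℕ∞) : WithTop ℕ∞) g :=
      Complex.reCLM.contDiff.comp ((hG.of_le (by simp)).comp hι)
    have hge : ∀ ρ : ℝ, 0 < ρ → g ρ = ρ ^ (1 / k) := by
      intro ρ hρ
      have := hGeq 0 0 0 ρ hρ.le
      simp only [Real.cos_zero, Real.sin_zero, mul_one, mul_zero, Complex.ofReal_zero,
        zero_mul, neg_zero, Complex.exp_zero, one_mul, Complex.ofReal_one,
        Int.cast_one, abs_one] at this
      simp only [hgdef]
      rw [this, Complex.ofReal_re]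
    exact no_smooth_ext (1 / k) ha1 haN g hsm hge
  · rintro ⟨n, hn1, hΔn⟩
    have hn0 : (0:ℝ) < (n : ℝ) := by exact_mod_cast hn1
    have hkn : k = 1 / (n : ℝ) := by
      have h2 : 2 * π * (1 - k) = 2 * π * (1 - 1 / (n : ℝ)) := by rw [← hΔ, hΔn]
      have h3 : (1 : ℝ) - k = 1 - 1 / (n : ℝ) :=
        mul_left_cancel₀ (by positivity) h2
      linarith
    intro l ε β
    set m := l.natAbs with hmdef
    obtain ⟨sgn, hs, hsgn⟩ : ∃ sgn : ℂ, (sgn = 1 ∨ sgn = -1) ∧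
        sgn * (m : ℂ) = (l : ℂ) := by
      rcases le_or_gt 0 l with hl | hl
      · refine ⟨1, Or.inl rfl, ?_⟩
        obtain ⟨m2, rfl⟩ : ∃ m2 : ℕ, l = (m2 : ℤ) := ⟨l.toNat, (Int.toNat_of_nonneg hl).symm⟩
        simp [hmdef]
      · refine ⟨-1, Or.inr rfl, ?_⟩
        have h2 : ((m : ℤ)) = -l := Int.ofNat_natAbs_of_nonpos hl.le
        have h3 : ((m : ℕ) : ℂ) = -(l : ℂ) := by exact_mod_cast h2
        rw [h3]; ring
    refine ⟨fun p : ℝ × ℝ × ℝ × ℝ × ℝ =>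
      Complex.exp (-((ε : ℂ) * (p.1 : ℂ)) * Complex.I) *
      Complex.exp ((β : ℂ) * (p.2.2.2.1 : ℂ) * Complex.I) *
      (((p.2.1 : ℂ)) + ((p.2.2.1 : ℂ)) * (sgn * Complex.I)) ^ m *
      ((p.2.2.2.2 : ℂ)) ^ (m * (n - 1)),
      contDiff_mode ε β m (m * (n - 1)) (sgn * Complex.I), ?_⟩
    intro t z φ ρ hρ
    dsimp only
    have hsub : n - 1 + 1 = n := Nat.succ_pred_eq_of_pos hn1
    have key := surface_id φ ρ hρ m (n - 1) sgn hs
    rw [hsub] at key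
    have habs : (ρ ^ (|(l : ℝ)| / k) : ℝ) = ρ ^ (m * n : ℕ) := by
      have h4 : |(l : ℝ)| / k = ((m * n : ℕ) : ℝ) := by
        rw [hkn, div_div_eq_mul_div, div_one]
        push_cast [hmdef, Nat.cast_natAbs]
        ring
      rw [h4, Real.rpow_natCast]
    have hsgn' : sgn * (m : ℂ) * (φ : ℂ) * Complex.I =
        (l : ℂ) * (φ : ℂ) * Complex.I := by rw [hsgn]
    rw [mul_assoc, key, hsgn', habs, ← mul_assoc]
end

section
/- Let k ∈ (0,1] and let Δ = 2π(1−k) be the deficit angle. The following are equivalent: (i) for every l ∈ ℤ there exist C^∞ functions H₀, H₊, H₋ : ℝ³ → ℂ such that for all ρ ≥ 0 and all φ ∈ ℝ: H₀(ρ·cos φ, ρ·sin φ, ρ) = exp(ilφ)·ρ^(|l|/k), H₊(ρ·cos φ, ρ·sin φ, ρ) = exp(i(l+1)φ)·ρ^(|1 + l/k|), and H₋(ρ·cos φ, ρ·sin φ, ρ) = exp(i(l−1)φ)·ρ^(|1 − l/k|); (ii) there exists n ∈ ℕ, n ≥ 1, such that Δ = 2π(1 − 1/n). (Theorem: the conical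 space-time of a cosmic string can be a background of an asymptotically smooth electromagnetic field only for the discrete spectrum Δ = 2π(1 − 1/n).) -/
open Real Complex

open Filter Topology in

lemma rpow_ext_nat (b : ℝ) (hb : 0 ≤ b) (G : ℝ → ℝ) (hG : ContDiff ℝ (⊤ : ℕ∞) G)
    (h : ∀ t : ℝ, 0 ≤ t → G t = t ^ b) : ∃ n : ℕ, b = n := by
  by_contra hn
  push_neg at hn
  set n : ℕ := ⌊b⌋₊ with hndef
  have h1 : (n : ℝ) < b := lt_of_le_of_ne (Nat.floor_le hb) (fun h => hn n h.symm)
  have h2 : b < n + 1 := Nat.lt_floor_add_one b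
  -- the iterated derivatives on (0, ∞)
  have key : ∀ (j : ℕ) (t : ℝ), 0 < t →
      iteratedDeriv j G t = (∏ i ∈ Finset.range j, (b - i)) * t ^ (b - j) := by
    intro j
    induction j with
    | zero => intro t ht; simp [h t ht.le]
    | succ j ih =>
      intro t ht
      rw [iteratedDeriv_succ]
      have hev : iteratedDeriv j G =ᶠ[nhds t]
          fun s => (∏ i ∈ Finset.range j, (b - i)) * s ^ (b - j) := by
        filter_upwards [Ioi_mem_nhds ht] with s hs
        exact ih s hs
      rw [hev.deriv_eq]
      have hd : HasDerivAt (fun s : ℝ => (∏ i ∈ Finset.range j, (b - i)) * s ^ (b - j))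
          ((∏ i ∈ Finset.range j, (b - i)) * ((b - j) * t ^ (b - j - 1))) t :=
        (Real.hasDerivAt_rpow_const (Or.inl ht.ne')).const_mul _
      rw [hd.deriv, Finset.prod_range_succ]
      rw [show b - (j+1:ℕ) = b - j - 1 by push_cast; ring, mul_assoc]
  set c : ℝ := ∏ i ∈ Finset.range n, (b - i) with hc
  have hcpos : 0 < c := by
    refine Finset.prod_pos fun i hi => ?_
    have hi' : (i : ℝ) < n := by exact_mod_cast Finset.mem_range.mp hi
    linarith
  set e : ℝ := b - n with he
  have he0 : 0 < e := by simp only [he]; linarith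
  have he1 : e < 1 := by simp only [he]; linarith
  set D := iteratedDeriv n G with hD
  have hDt : ∀ t : ℝ, 0 < t → D t = c * t ^ e := fun t ht => key n t ht
  have hDc : Continuous D := hG.continuous_iteratedDeriv n (by exact_mod_cast le_top)
  -- D 0 = 0
  have hD0 : D 0 = 0 := by
    have l1 : Tendsto D (𝓝[>] (0:ℝ)) (𝓝 (D 0)) :=
      (hDc.continuousAt.tendsto).mono_left nhdsWithin_le_nhds
    have l2 : Tendsto D (𝓝[>] (0:ℝ)) (𝓝 0) := by
      have : Tendsto (fun t : ℝ => c * t ^ e) (𝓝[>] (0:ℝ)) (𝓝 (c * (0:ℝ) ^ e)) := by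
        refine Tendsto.const_mul c ?_
        exact ((Real.continuousAt_rpow_const 0 e (Or.inr he0.le)).tendsto).mono_left
          nhdsWithin_le_nhds
      rw [Real.zero_rpow he0.ne', mul_zero] at this
      refine this.congr' ?_
      filter_upwards [self_mem_nhdsWithin] with t (ht : 0 < t)
      exact (hDt t ht).symm
    exact tendsto_nhds_unique l1 l2
  -- derivative of D at 0 exists
  have hDiff : DifferentiableAt ℝ D 0 :=
    (hG.differentiable_iteratedDeriv n (by exact_mod_cast ENat.coe_lt_top n)).differentiableAt
  have hslope : Tendsto (slope D 0) (𝓝[>] (0:ℝ)) (𝓝 (deriv D 0)) :=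
    (hasDerivAt_iff_tendsto_slope.mp hDiff.hasDerivAt).mono_left
      (nhdsWithin_mono 0 fun t ht => ne_of_gt ht)
  -- but the slope tends to atTop
  have hslope' : Tendsto (slope D 0) (𝓝[>] (0:ℝ)) atTop := by
    have base : Tendsto (fun t : ℝ => c * t ^ (e - 1)) (𝓝[>] (0:ℝ)) atTop := by
      have h1 : Tendsto (fun t : ℝ => (t⁻¹) ^ (1 - e)) (𝓝[>] (0:ℝ)) atTop :=
        (tendsto_rpow_atTop (by linarith)).comp tendsto_inv_nhdsGT_zero
      have h2 : Tendsto (fun t : ℝ => t ^ (e - 1)) (𝓝[>] (0:ℝ)) atTop := by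
        refine h1.congr' ?_
        filter_upwards [self_mem_nhdsWithin] with t (ht : 0 < t)
        rw [Real.inv_rpow ht.le, ← Real.rpow_neg ht.le, neg_sub]
      exact h2.const_mul_atTop hcpos
    refine base.congr' ?_
    filter_upwards [self_mem_nhdsWithin] with t (ht : 0 < t)
    rw [slope_def_field, hD0, hDt t ht, sub_zero, sub_zero, Real.rpow_sub ht,
      Real.rpow_one, mul_div_assoc]
  exact not_tendsto_atTop_of_tendsto_nhds hslope hslope'


lemma cone_smooth (m : ℤ) (j : ℕ) :
    ∃ H : ℝ × ℝ × ℝ → ℂ, ContDiff ℝ (⊤ : ℕ∞) H ∧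
      ∀ ρ φ : ℝ, H (ρ * Real.cos φ, ρ * Real.sin φ, ρ) =
        Complex.exp ((m : ℂ) * (φ : ℂ) * Complex.I) *
          ((ρ ^ ((m.natAbs + j : ℕ) : ℝ) : ℝ) : ℂ) := by
  have c1 : ContDiff ℝ (⊤ : ℕ∞) fun p : ℝ × ℝ × ℝ => ((p.1 : ℂ)) :=
    Complex.ofRealCLM.contDiff.comp contDiff_fst
  have c2 : ContDiff ℝ (⊤ : ℕ∞) fun p : ℝ × ℝ × ℝ => ((p.2.1 : ℂ)) :=
    Complex.ofRealCLM.contDiff.comp (contDiff_fst.comp contDiff_snd)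
  have c3 : ContDiff ℝ (⊤ : ℕ∞) fun p : ℝ × ℝ × ℝ => ((p.2.2 : ℂ)) :=
    Complex.ofRealCLM.contDiff.comp (contDiff_snd.comp contDiff_snd)
  have base : ∀ ρ φ : ℝ, ((ρ * Real.cos φ : ℝ) : ℂ) + ((ρ * Real.sin φ : ℝ) : ℂ) * Complex.I
      = (ρ : ℂ) * Complex.exp ((φ : ℂ) * Complex.I) := by
    intro ρ φ
    rw [Complex.exp_mul_I]
    push_cast
    ring
  have base' : ∀ ρ φ : ℝ, ((ρ * Real.cos φ : ℝ) : ℂ) - ((ρ * Real.sin φ : ℝ) : ℂ) * Complex.I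
      = (ρ : ℂ) * Complex.exp (-(φ : ℂ) * Complex.I) := by
    intro ρ φ
    rw [Complex.exp_mul_I, Complex.cos_neg, Complex.sin_neg]
    push_cast
    ring
  have hrpow : ∀ ρ : ℝ, ((ρ ^ ((m.natAbs + j : ℕ) : ℝ) : ℝ) : ℂ)
      = (ρ : ℂ) ^ m.natAbs * (ρ : ℂ) ^ j := by
    intro ρ
    rw [Real.rpow_natCast]
    push_cast [pow_add]
    ring
  rcases le_or_gt 0 m with hm | hm
  · refine ⟨fun p => ((p.1 : ℂ) + (p.2.1 : ℂ) * Complex.I) ^ m.natAbs * (p.2.2 : ℂ) ^ j,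
      ((c1.add (c2.mul contDiff_const)).pow _).mul (c3.pow _), fun ρ φ => ?_⟩
    simp only [base, hrpow]
    rw [mul_pow, ← Complex.exp_nat_mul]
    have : ((m.natAbs : ℂ)) = (m : ℂ) := by
      rw [← Int.cast_natCast, Int.natAbs_of_nonneg hm]
    rw [show ((m.natAbs : ℕ) : ℂ) * ((φ : ℂ) * Complex.I) = (m : ℂ) * (φ : ℂ) * Complex.I by
      rw [← this]; ring]
    ring
  · refine ⟨fun p => ((p.1 : ℂ) - (p.2.1 : ℂ) * Complex.I) ^ m.natAbs * (p.2.2 : ℂ) ^ j,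
      ((c1.sub (c2.mul contDiff_const)).pow _).mul (c3.pow _), fun ρ φ => ?_⟩
    simp only [base', hrpow]
    rw [mul_pow, ← Complex.exp_nat_mul]
    have : ((m.natAbs : ℂ)) = -(m : ℂ) := by
      rw [← Int.cast_natCast, Int.ofNat_natAbs_of_nonpos hm.le, Int.cast_neg]
    rw [show ((m.natAbs : ℕ) : ℂ) * (-(φ : ℂ) * Complex.I) = (m : ℂ) * (φ : ℂ) * Complex.I by
      rw [this]; ring]
    ring

lemma abs_identity (l : ℤ) (n : ℕ) (hn : 1 ≤ n) :
    |1 + l * (n : ℤ)| = |l + 1| + |l| * ((n : ℤ) - 1) := by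
  have hn' : (1 : ℤ) ≤ n := by exact_mod_cast hn
  rcases le_or_gt 0 l with h | h
  · rw [_root_.abs_of_nonneg (by nlinarith), _root_.abs_of_nonneg (by linarith), _root_.abs_of_nonneg h]
    ring
  · have hl : l ≤ -1 := by omega
    rw [_root_.abs_of_nonpos (by nlinarith), _root_.abs_of_nonpos (by linarith), _root_.abs_of_neg h]
    ring


lemma natAbs_identity (l : ℤ) (n : ℕ) (hn : 1 ≤ n) :
    (1 + l * n).natAbs = (l + 1).natAbs + l.natAbs * (n - 1) := by
  zify [hn]
  exact abs_identity l n hn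

/-- The conical space-time of a cosmic string (with metric parameter `k ∈ (0,1]` and
deficit angle `Δ = 2π(1−k)`) can be a background of an asymptotically smooth
electromagnetic field — i.e. for every `l ∈ ℤ` the angular/radial parts
`exp(ilφ)·ρ^(|l|/k)` and `exp(i(l±1)φ)·ρ^(|1 ± l/k|)` of the elementary solutions extend
to `C^∞` functions on `ℝ³` — exactly for the discrete spectrum of deficit angles
`Δ = 2π(1 − 1/n)`, `n = 1, 2, …`. -/
theorem cosmic_string_em_asymptotically_smooth_iff
    (k : ℝ) (hk0 : 0 < k) (hk1 : k ≤ 1) (Δ : ℝ) (hΔ : Δ = 2 * π * (1 - k)) :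
    (∀ l : ℤ, ∃ H₀ Hp Hm : ℝ × ℝ × ℝ → ℂ,
        ContDiff ℝ (⊤ : ℕ∞) H₀ ∧ ContDiff ℝ (⊤ : ℕ∞) Hp ∧ ContDiff ℝ (⊤ : ℕ∞) Hm ∧
        ∀ ρ φ : ℝ, 0 ≤ ρ →
          H₀ (ρ * Real.cos φ, ρ * Real.sin φ, ρ) =
            Complex.exp ((l : ℂ) * (φ : ℂ) * Complex.I) * ((ρ ^ (|(l : ℝ)| / k) : ℝ) : ℂ) ∧
          Hp (ρ * Real.cos φ, ρ * Real.sin φ, ρ) =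
            Complex.exp (((l : ℂ) + 1) * (φ : ℂ) * Complex.I) *
              ((ρ ^ |1 + (l : ℝ) / k| : ℝ) : ℂ) ∧
          Hm (ρ * Real.cos φ, ρ * Real.sin φ, ρ) =
            Complex.exp (((l : ℂ) - 1) * (φ : ℂ) * Complex.I) *
              ((ρ ^ |1 - (l : ℝ) / k| : ℝ) : ℂ)) ↔
      ∃ n : ℕ, 1 ≤ n ∧ Δ = 2 * π * (1 - 1 / (n : ℝ)) := by
  constructor
  · intro hyp
    obtain ⟨H₀, Hp, Hm, h0, _, _, hval⟩ := hyp 1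
    set G : ℝ → ℝ := fun t => (H₀ (t, 0, t)).re with hGdef
    have hGsmooth : ContDiff ℝ (⊤ : ℕ∞) G :=
      Complex.reCLM.contDiff.comp (h0.comp (contDiff_id.prodMk (contDiff_const.prodMk contDiff_id)))
    have hGval : ∀ t : ℝ, 0 ≤ t → G t = t ^ (1 / k) := by
      intro t ht
      have h1 := (hval t 0 ht).1
      simp only [Real.cos_zero, Real.sin_zero, mul_one, mul_zero, Complex.ofReal_zero,
        Int.cast_one, one_mul, zero_mul, Complex.exp_zero, abs_one] at h1
      rw [hGdef]
      simp only [h1, Complex.ofReal_re]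
    obtain ⟨n, hbn⟩ := rpow_ext_nat (1 / k) (by positivity) G hGsmooth hGval
    have h1k : (1 : ℝ) ≤ 1 / k := by rw [le_div_iff₀ hk0]; linarith
    have hn1 : 1 ≤ n := by
      rw [hbn] at h1k; exact_mod_cast h1k
    have hn0 : (n : ℝ) ≠ 0 := by positivity
    have hk : k = 1 / n := by
      rw [eq_div_iff hn0, ← hbn]
      field_simp
    exact ⟨n, hn1, by rw [hΔ, hk]⟩
  · rintro ⟨n, hn1, hΔn⟩
    have hπ : (0 : ℝ) < 2 * π := by positivity
    have hk : k = 1 / n := by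
      have h2 : 2 * π * (1 - k) = 2 * π * (1 - 1 / (n : ℝ)) := by rw [← hΔ, hΔn]
      have h3 := mul_left_cancel₀ hπ.ne' h2
      linarith
    have hn0 : (n : ℝ) ≠ 0 := by
      have : 0 < n := hn1
      positivity
    have hn' : (1 : ℤ) ≤ (n : ℤ) := by exact_mod_cast hn1
    intro l
    set j : ℕ := l.natAbs * (n - 1) with hj
    obtain ⟨m, rfl⟩ : ∃ m, n = m + 1 := ⟨n - 1, by omega⟩
    have hdiv : (l : ℝ) / k = l * (m + 1 : ℕ) := by rw [hk]; field_simp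
    have e0 : |(l : ℝ)| / k = ((l.natAbs + j : ℕ) : ℝ) := by
      have h7 : l.natAbs + j = l.natAbs * (m + 1) := by rw [hj]; simp; ring
      rw [h7, hk]
      push_cast [Nat.cast_natAbs]
      rw [div_div_eq_mul_div, div_one]
    have ep : |1 + (l : ℝ) / k| = (((l + 1).natAbs + j : ℕ) : ℝ) := by
      rw [hdiv, hj, ← natAbs_identity l (m + 1) (by omega)]
      push_cast [Nat.cast_natAbs]
      ring_nf
    have em : |1 - (l : ℝ) / k| = (((l - 1).natAbs + j : ℕ) : ℝ) := by
      have h5 : (l - 1).natAbs = (-l + 1).natAbs := by omega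
      have h6 : l.natAbs = (-l).natAbs := by omega
      rw [hdiv, hj, h5, h6, ← natAbs_identity (-l) (m + 1) (by omega)]
      push_cast [Nat.cast_natAbs]
      rw [show (1 : ℝ) + -↑l * (↑m + 1) = 1 - ↑l * (↑m + 1) by ring]
    obtain ⟨H₀, hH₀, hv₀⟩ := cone_smooth l j
    obtain ⟨HP, hHP, hvp⟩ := cone_smooth (l + 1) j
    obtain ⟨HM, hHM, hvm⟩ := cone_smooth (l - 1) j
    refine ⟨H₀, HP, HM, hH₀, hHP, hHM, fun ρ φ hρ => ⟨?_, ?_, ?_⟩⟩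
    · rw [e0]; exact hv₀ ρ φ
    · rw [ep, hvp ρ φ]; push_cast; ring_nf
    · rw [em, hvm ρ φ]; push_cast; ring_nf
end

section
/- Let k ∈ (0,1], l ∈ ℤ, ε, β ∈ ℝ, and let F : ℝ → ℂ be a C^∞ function with F(0) ≠ 0. Then there exists a C^∞ function G : ℝ⁵ → ℂ such that G(t, ρ·cos φ, ρ·sin φ, z, ρ) = exp(−iεt)·exp(iβz)·exp(ilφ)·ρ^(|l|/k)·F(ρ) for all t, z, φ ∈ ℝ and all ρ ≥ 0, if and only if there exists m ∈ ℕ with |l|/k = m. (Proposition: the prolonged normal modes Ψ•_{ε,l,β} are smooth functions on the singular cosmic-string differential space precisely when |l|/k ∈ ℕ, and non-smooth otherwise.) -/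
open Real Complex
open Filter Set Finset

lemma pow_not_smooth_aux {a : ℝ} (ha : 0 ≤ a) (hna : ∀ m : ℕ, a ≠ m)
    {f : ℝ → ℂ} (hf : ContDiff ℝ (⊤ : ℕ∞) f) {F : ℝ → ℂ} (hFc : Continuous F) (hF0 : F 0 ≠ 0)
    (hfF : ∀ x : ℝ, 0 ≤ x → f x = ((x ^ a : ℝ) : ℂ) * F x) : False := by
  set n := ⌊a⌋₊ with hn
  have hna' : (n : ℝ) < a := lt_of_le_of_ne (Nat.floor_le ha) (fun h => hna n h.symm)
  have hna2 : a < n + 1 := Nat.lt_floor_add_one a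
  have hfC : ContDiffOn ℝ (n + 1) f (Icc (0:ℝ) 1) := (hf.of_le (by exact_mod_cast le_top)).contDiffOn
  obtain ⟨C, hC⟩ := exists_taylor_mean_remainder_bound (zero_le_one) hfC
  set c : ℕ → ℂ := fun i => ((i.factorial : ℝ)⁻¹) • iteratedDerivWithin i f (Icc (0:ℝ) 1) 0 with hc
  have hT : ∀ x : ℝ, taylorWithinEval f n (Icc (0:ℝ) 1) 0 x
      = ∑ i ∈ Finset.range (n + 1), x ^ i • c i := by
    intro x
    rw [taylor_within_apply]
    refine Finset.sum_congr rfl fun i _ => ?_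
    rw [hc, smul_smul, sub_zero, mul_comm]
  obtain ⟨M, hM⟩ := isCompact_Icc.exists_bound_of_continuousOn
    (f := F) (s := Icc (0:ℝ) 1) hFc.continuousOn
  have hfb : ∀ x ∈ Ioc (0:ℝ) 1, ‖f x‖ ≤ M * x ^ a := by
    intro x hx
    rw [hfF x hx.1.le, norm_mul, Complex.norm_real, Real.norm_eq_abs,
      _root_.abs_of_nonneg (Real.rpow_nonneg hx.1.le a), mul_comm]
    exact mul_le_mul_of_nonneg_right (hM x ⟨hx.1.le, hx.2⟩) (Real.rpow_nonneg hx.1.le a)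
  -- all Taylor coefficients vanish
  have hczero : ∀ j, j ≤ n → c j = 0 := by
    intro j
    induction j using Nat.strong_induction_on with
    | _ j ih =>
      intro hj
      set S : ℝ → ℂ := fun x => ∑ i ∈ Finset.range (n + 1), x ^ (i - j) • c i with hS
      have hS0 : S 0 = c j := by
        rw [hS]
        simp only
        rw [Finset.sum_eq_single j]
        · simp
        · intro i hi hij
          rcases lt_or_gt_of_ne hij with h | h
          · rw [ih i h (le_trans h.le hj)]; simp
          · rw [zero_pow (Nat.sub_ne_zero_of_lt h), zero_smul]
        · intro h; exact absurd (Finset.mem_range.2 (Nat.lt_succ_of_le hj)) h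
      have hScont : Continuous S := by
        apply continuous_finset_sum
        intro i _
        exact (continuous_pow _).smul continuous_const
      have hTS : ∀ x : ℝ, x ^ j • S x = taylorWithinEval f n (Icc (0:ℝ) 1) 0 x := by
        intro x
        rw [hT, hS, Finset.smul_sum]
        refine Finset.sum_congr rfl fun i hi => ?_
        rcases lt_or_ge i j with h | h
        · rw [ih i h (le_trans h.le hj)]; simp
        · rw [smul_smul, ← pow_add, Nat.add_sub_cancel' h]
      have hbound : ∀ x ∈ Ioc (0:ℝ) 1,
          ‖S x‖ ≤ M * x ^ (a - j) + C * x ^ (n + 1 - j) := by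
        intro x hx
        have hxp : (0:ℝ) < x ^ j := pow_pos hx.1 j
        rw [← mul_le_mul_iff_of_pos_right hxp]
        have h1 : ‖S x‖ * x ^ j = ‖x ^ j • S x‖ := by
          rw [norm_smul, Real.norm_eq_abs, abs_of_pos hxp, mul_comm]
        rw [h1, hTS x]
        have h2 : ‖taylorWithinEval f n (Icc (0:ℝ) 1) 0 x‖
            ≤ ‖f x‖ + C * (x - 0) ^ (n + 1) := by
          have := hC x ⟨hx.1.le, hx.2⟩
          calc ‖taylorWithinEval f n (Icc (0:ℝ) 1) 0 x‖
              = ‖f x - (f x - taylorWithinEval f n (Icc (0:ℝ) 1) 0 x)‖ := by ring_nf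
            _ ≤ ‖f x‖ + ‖f x - taylorWithinEval f n (Icc (0:ℝ) 1) 0 x‖ := norm_sub_le _ _
            _ ≤ ‖f x‖ + C * (x - 0) ^ (n + 1) := by linarith
        rw [sub_zero] at h2
        have h3 : (M * x ^ (a - j) + C * x ^ (n + 1 - j)) * x ^ j
            = M * x ^ a + C * x ^ (n + 1) := by
          rw [add_mul, mul_assoc, mul_assoc, ← pow_add, Nat.sub_add_cancel (Nat.le_succ_of_le hj)]
          congr 2
          rw [← Real.rpow_natCast x j, ← Real.rpow_add hx.1, sub_add_cancel]
        rw [h3]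
        have := hfb x hx
        linarith [h2, this]
      have hlim1 : Tendsto (fun x => ‖S x‖) (nhdsWithin 0 (Ioi (0:ℝ))) (nhds ‖c j‖) := by
        rw [← hS0]
        exact ((hScont.norm.tendsto 0).mono_left nhdsWithin_le_nhds)
      have hlim2 : Tendsto (fun x : ℝ => M * x ^ (a - j) + C * x ^ (n + 1 - j))
          (nhdsWithin 0 (Ioi (0:ℝ))) (nhds 0) := by
        have hpos : (0:ℝ) < a - j := by
          have : (j:ℝ) ≤ n := Nat.cast_le.2 hj
          linarith
        have t1 : Tendsto (fun x : ℝ => x ^ (a - (j:ℝ))) (nhdsWithin 0 (Ioi (0:ℝ))) (nhds 0) := by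
          have := (Real.continuousAt_rpow_const 0 (a - j) (Or.inr hpos.le)).tendsto
          rw [Real.zero_rpow hpos.ne'] at this
          exact this.mono_left nhdsWithin_le_nhds
        have t2 : Tendsto (fun x : ℝ => x ^ (n + 1 - j)) (nhdsWithin 0 (Ioi (0:ℝ))) (nhds 0) := by
          have h0 : (0:ℝ) ^ (n + 1 - j) = 0 := by
            rw [zero_pow]; omega
          have := (continuous_pow (n + 1 - j)).tendsto (0:ℝ)
          rw [h0] at this
          exact this.mono_left nhdsWithin_le_nhds
        have := (t1.const_mul M).add (t2.const_mul C)
        simpa using this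
      have : ‖c j‖ ≤ 0 := by
        refine le_of_tendsto_of_tendsto hlim1 hlim2 ?_
        filter_upwards [Ioc_mem_nhdsGT (zero_lt_one)] with x hx
        exact hbound x hx
      simpa using le_antisymm this (norm_nonneg _)
  -- conclude
  have hT0 : ∀ x : ℝ, taylorWithinEval f n (Icc (0:ℝ) 1) 0 x = 0 := by
    intro x
    rw [hT]
    refine Finset.sum_eq_zero fun i hi => ?_
    rw [hczero i (Nat.lt_succ_iff.1 (Finset.mem_range.1 hi))]
    simp
  have hFb : ∀ x ∈ Ioc (0:ℝ) 1, ‖F x‖ ≤ C * x ^ ((n:ℝ) + 1 - a) := by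
    intro x hx
    have hxa : (0:ℝ) < x ^ a := Real.rpow_pos_of_pos hx.1 a
    rw [← mul_le_mul_iff_of_pos_right hxa]
    have h1 := hC x ⟨hx.1.le, hx.2⟩
    rw [hT0 x, sub_zero, hfF x hx.1.le, norm_mul, Complex.norm_real, Real.norm_eq_abs,
      _root_.abs_of_nonneg (Real.rpow_nonneg hx.1.le a), sub_zero] at h1
    have h3 : C * x ^ ((n:ℝ) + 1 - a) * x ^ a = C * x ^ (n + 1) := by
      rw [mul_assoc, ← Real.rpow_add hx.1, sub_add_cancel]
      norm_num [← Real.rpow_natCast x (n+1)]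
    rw [h3]
    linarith [h1]
  have hlimF : Tendsto (fun x => ‖F x‖) (nhdsWithin 0 (Ioi (0:ℝ))) (nhds ‖F 0‖) :=
    (hFc.norm.tendsto 0).mono_left nhdsWithin_le_nhds
  have hlimR : Tendsto (fun x : ℝ => C * x ^ ((n:ℝ) + 1 - a)) (nhdsWithin 0 (Ioi (0:ℝ)))
      (nhds 0) := by
    have hpos : (0:ℝ) < (n:ℝ) + 1 - a := by linarith
    have t1 := (Real.continuousAt_rpow_const 0 ((n:ℝ) + 1 - a) (Or.inr hpos.le)).tendsto
    rw [Real.zero_rpow hpos.ne'] at t1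
    have t2 : Tendsto (fun x : ℝ => x ^ ((n:ℝ) + 1 - a)) (nhdsWithin 0 (Ioi (0:ℝ)))
        (nhds 0) := t1.mono_left nhdsWithin_le_nhds
    simpa using t2.const_mul C
  have : ‖F 0‖ ≤ 0 := by
    refine le_of_tendsto_of_tendsto hlimF hlimR ?_
    filter_upwards [Ioc_mem_nhdsGT (zero_lt_one)] with x hx
    exact hFb x hx
  exact hF0 (norm_le_zero_iff.1 this)

/-- The prolonged Klein–Gordon normal mode `exp(−iεt)·exp(iβz)·exp(ilφ)·ρ^(|l|/k)·F(ρ)`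
(with `C^∞` radial profile `F`, `F 0 ≠ 0`) is smooth on the singular cosmic-string
differential space — i.e. extends to a `C^∞` function on `ℝ⁵` — precisely when
`|l|/k ∈ ℕ`. -/
theorem prolonged_normal_mode_smooth_iff
    (k : ℝ) (hk0 : 0 < k) (hk1 : k ≤ 1) (l : ℤ) (ε β : ℝ)
    (F : ℝ → ℂ) (hF : ContDiff ℝ (⊤ : ℕ∞) F) (hF0 : F 0 ≠ 0) :
    (∃ G : ℝ × ℝ × ℝ × ℝ × ℝ → ℂ, ContDiff ℝ (⊤ : ℕ∞) G ∧
        ∀ t z φ ρ : ℝ, 0 ≤ ρ →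
          G (t, ρ * Real.cos φ, ρ * Real.sin φ, z, ρ) =
            Complex.exp (-((ε : ℂ) * (t : ℂ)) * Complex.I) *
            Complex.exp ((β : ℂ) * (z : ℂ) * Complex.I) *
            Complex.exp ((l : ℂ) * (φ : ℂ) * Complex.I) *
            ((ρ ^ (|(l : ℝ)| / k) : ℝ) : ℂ) * F ρ) ↔
      ∃ m : ℕ, |(l : ℝ)| / k = (m : ℝ) := by
  set a : ℝ := |(l : ℝ)| / k with haa
  have ha : 0 ≤ a := div_nonneg (abs_nonneg _) hk0.le
  constructor
  · rintro ⟨G, hG, hGeq⟩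
    by_contra h
    push_neg at h
    have hcurve : ContDiff ℝ (⊤ : ℕ∞) (fun x : ℝ => ((0:ℝ), x, (0:ℝ), (0:ℝ), x)) :=
      contDiff_const.prodMk (contDiff_id.prodMk (contDiff_const.prodMk
        (contDiff_const.prodMk contDiff_id)))
    refine pow_not_smooth_aux ha (fun m hm => h m hm)
      (hG.comp hcurve) hF.continuous hF0 ?_
    intro x hx
    have := hGeq 0 0 0 x hx
    simpa using this
  · rintro ⟨m, hm⟩
    set N := l.natAbs with hN
    have hNa : ((N : ℝ)) = |(l : ℝ)| := by
      rw [hN]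
      push_cast [Nat.cast_natAbs]
      norm_num
    have hNm : N ≤ m := by
      have h1 : |(l : ℝ)| ≤ a := by
        rw [haa, le_div_iff₀ hk0]
        exact mul_le_of_le_one_right (abs_nonneg _) hk1
      have : (N : ℝ) ≤ (m : ℝ) := by rw [hNa]; rw [hm] at h1; exact h1
      exact_mod_cast this
    set s : ℂ := if 0 ≤ l then Complex.I else -Complex.I with hs
    refine ⟨fun p => Complex.exp (-((ε : ℂ) * (p.1 : ℂ)) * Complex.I) *
        Complex.exp ((β : ℂ) * (p.2.2.2.1 : ℂ) * Complex.I) *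
        ((p.2.1 : ℂ) + s * (p.2.2.1 : ℂ)) ^ N *
        (p.2.2.2.2 : ℂ) ^ (m - N) * F p.2.2.2.2, ?_, ?_⟩
    · have hre : ContDiff ℝ (⊤ : ℕ∞) (fun x : ℝ => (x : ℂ)) := Complex.ofRealCLM.contDiff
      have h1 : ContDiff ℝ (⊤ : ℕ∞) (fun p : ℝ × ℝ × ℝ × ℝ × ℝ => p.1) := contDiff_fst
      have h2 : ContDiff ℝ (⊤ : ℕ∞) (fun p : ℝ × ℝ × ℝ × ℝ × ℝ => p.2.1) :=
        contDiff_fst.comp contDiff_snd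
      have h3 : ContDiff ℝ (⊤ : ℕ∞) (fun p : ℝ × ℝ × ℝ × ℝ × ℝ => p.2.2.1) :=
        contDiff_fst.comp (contDiff_snd.comp contDiff_snd)
      have h4 : ContDiff ℝ (⊤ : ℕ∞) (fun p : ℝ × ℝ × ℝ × ℝ × ℝ => p.2.2.2.1) :=
        contDiff_fst.comp (contDiff_snd.comp (contDiff_snd.comp contDiff_snd))
      have h5 : ContDiff ℝ (⊤ : ℕ∞) (fun p : ℝ × ℝ × ℝ × ℝ × ℝ => p.2.2.2.2) :=
        contDiff_snd.comp (contDiff_snd.comp (contDiff_snd.comp contDiff_snd))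
      have hexp : ContDiff ℝ (⊤ : ℕ∞) Complex.exp := Complex.contDiff_exp
      exact ((((hexp.comp ((contDiff_const.mul (hre.comp h1)).neg.mul contDiff_const)).mul
        (hexp.comp ((contDiff_const.mul (hre.comp h4)).mul contDiff_const))).mul
        (((hre.comp h2).add (contDiff_const.mul (hre.comp h3))).pow N)).mul
        ((hre.comp h5).pow (m - N))).mul (hF.comp h5)
    · intro t z φ ρ hρ
      simp only
      have hkey : ((ρ * Real.cos φ : ℝ) : ℂ) + s * ((ρ * Real.sin φ : ℝ) : ℂ)
          = (ρ : ℂ) * ((Real.cos φ : ℂ) + s * (Real.sin φ : ℂ)) := by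
        push_cast; ring
      have hcs : ((Real.cos φ : ℂ) + s * (Real.sin φ : ℂ)) ^ N
          = Complex.exp ((l : ℂ) * (φ : ℂ) * Complex.I) := by
        rcases le_or_gt 0 l with hl | hl
        · rw [hs, if_pos hl]
          have e1 : (Real.cos φ : ℂ) + Complex.I * (Real.sin φ : ℂ)
              = Complex.exp ((φ : ℂ) * Complex.I) := by
            rw [Complex.exp_mul_I, ← Complex.ofReal_cos, ← Complex.ofReal_sin]; ring
          rw [e1, ← Complex.exp_nat_mul]
          congr 1
          have : ((N : ℤ) : ℂ) = (l : ℂ) := by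
            rw [hN, Int.natAbs_of_nonneg hl]
          push_cast at this ⊢
          rw [this]; ring
        · rw [hs, if_neg (not_le.2 hl)]
          have e1 : (Real.cos φ : ℂ) + (-Complex.I) * (Real.sin φ : ℂ)
              = Complex.exp ((-φ : ℂ) * Complex.I) := by
            rw [Complex.exp_mul_I, Complex.cos_neg, Complex.sin_neg,
              ← Complex.ofReal_cos, ← Complex.ofReal_sin]; ring
          rw [e1, ← Complex.exp_nat_mul]
          congr 1
          have hz : (N : ℤ) = -l := by
            rw [hN, ← Int.natAbs_neg]; exact Int.natAbs_of_nonneg (by omega)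
          have : ((N : ℤ) : ℂ) = -(l : ℂ) := by rw [hz]; push_cast; ring
          push_cast at this ⊢
          rw [this]; ring
      have hpow : ((ρ ^ a : ℝ) : ℂ) = (ρ : ℂ) ^ N * (ρ : ℂ) ^ (m - N) := by
        rw [hm, Real.rpow_natCast, Complex.ofReal_pow, ← pow_add,
          Nat.add_sub_cancel' hNm]
      rw [hkey, mul_pow, hcs, hpow]
      ring
end

section
/- Let k ∈ (0,1] and l ∈ ℤ. There exist C^∞ functions H₀, H₊, H₋ : ℝ³ → ℂ such that for all ρ ≥ 0 and all φ ∈ ℝ: H₀(ρ·cos φ, ρ·sin φ, ρ) = exp(ilφ)·ρ^(|l|/k), H₊(ρ·cos φ, ρ·sin φ, ρ) = exp(i(l+1)φ)·ρ^(|1 + l/k|), and H₋(ρ·cos φ, ρ·sin φ, ρ) = exp(i(l−1)φ)·ρ^(|1 − l/k|), if and only if there exists m ∈ ℕ with |l|/k = m. (Proposition: the prolonged electromagnetic elementary solutions A•_{ε,β,l} are smooth on the singular cosmic-string differential space precisely when |l|/k ∈ ℕ, and non-smooth otherwise.) -/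
open Real Complex Filter Topology

lemma cd_aux (c : ℂ) (p q : ℕ) :
    ContDiff ℝ (⊤ : ℕ∞) (fun v : ℝ × ℝ × ℝ => ((v.1 : ℂ) + c * (v.2.1 : ℂ)) ^ p * ((v.2.2 : ℂ)) ^ q) := by
  have h1 : ContDiff ℝ (⊤ : ℕ∞) (fun v : ℝ × ℝ × ℝ => (v.1 : ℂ)) :=
    Complex.ofRealCLM.contDiff.comp contDiff_fst
  have h2 : ContDiff ℝ (⊤ : ℕ∞) (fun v : ℝ × ℝ × ℝ => (v.2.1 : ℂ)) :=
    Complex.ofRealCLM.contDiff.comp (contDiff_fst.comp contDiff_snd)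
  have h3 : ContDiff ℝ (⊤ : ℕ∞) (fun v : ℝ × ℝ × ℝ => (v.2.2 : ℂ)) :=
    Complex.ofRealCLM.contDiff.comp (contDiff_snd.comp contDiff_snd)
  exact ((h1.add (contDiff_const.mul h2)).pow p).mul (h3.pow q)

lemma val_plus (p q : ℕ) (ρ φ : ℝ) :
    ((↑(ρ * Real.cos φ) : ℂ) + Complex.I * ↑(ρ * Real.sin φ)) ^ p * ((ρ : ℝ) : ℂ) ^ q =
      Complex.exp ((p : ℂ) * φ * Complex.I) * (ρ : ℂ) ^ (p + q) := by
  have h : ((↑(ρ * Real.cos φ) : ℂ) + Complex.I * ↑(ρ * Real.sin φ))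
      = (ρ : ℂ) * Complex.exp ((φ : ℂ) * Complex.I) := by
    rw [Complex.exp_mul_I]
    push_cast
    ring
  rw [h, mul_pow, ← Complex.exp_nat_mul, pow_add,
    show ((p : ℂ) * ((φ : ℂ) * Complex.I)) = (p : ℂ) * φ * Complex.I by ring]
  ring

lemma val_minus (p q : ℕ) (ρ φ : ℝ) :
    ((↑(ρ * Real.cos φ) : ℂ) + (-Complex.I) * ↑(ρ * Real.sin φ)) ^ p * ((ρ : ℝ) : ℂ) ^ q =
      Complex.exp (-(p : ℂ) * φ * Complex.I) * (ρ : ℂ) ^ (p + q) := by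
  have h : ((↑(ρ * Real.cos φ) : ℂ) + (-Complex.I) * ↑(ρ * Real.sin φ))
      = (ρ : ℂ) * Complex.exp (-(φ : ℂ) * Complex.I) := by
    rw [Complex.exp_mul_I, Complex.cos_neg, Complex.sin_neg]
    push_cast
    ring
  rw [h, mul_pow, ← Complex.exp_nat_mul, pow_add,
    show ((p : ℂ) * (-(φ : ℂ) * Complex.I)) = -(p : ℂ) * φ * Complex.I by ring]
  ring

lemma cast_rpow (ρ e : ℝ) (n : ℕ) (h : e = n) : ((ρ ^ e : ℝ) : ℂ) = (ρ : ℂ) ^ n := by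
  rw [h, Real.rpow_natCast, Complex.ofReal_pow]

lemma goal_plus (p q : ℕ) (ρ φ : ℝ) (c : ℂ) (e : ℝ) (hc : ((p : ℕ) : ℂ) = c)
    (he : e = ((p + q : ℕ) : ℝ)) :
    ((↑(ρ * Real.cos φ) : ℂ) + Complex.I * ↑(ρ * Real.sin φ)) ^ p * ((ρ : ℝ) : ℂ) ^ q
      = Complex.exp (c * φ * Complex.I) * ((ρ ^ e : ℝ) : ℂ) := by
  rw [val_plus, cast_rpow ρ e (p + q) he, hc]

lemma goal_minus (p q : ℕ) (ρ φ : ℝ) (c : ℂ) (e : ℝ) (hc : -((p : ℕ) : ℂ) = c)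
    (he : e = ((p + q : ℕ) : ℝ)) :
    ((↑(ρ * Real.cos φ) : ℂ) + (-Complex.I) * ↑(ρ * Real.sin φ)) ^ p * ((ρ : ℝ) : ℂ) ^ q
      = Complex.exp (c * φ * Complex.I) * ((ρ ^ e : ℝ) : ℂ) := by
  rw [val_minus, cast_rpow ρ e (p + q) he, hc]

lemma key_nat {a : ℝ} (ha : 0 ≤ a) {f : ℝ → ℝ} (hf : ContDiff ℝ (⊤ : ℕ∞) f)
    (heq : ∀ ρ : ℝ, 0 ≤ ρ → f ρ = ρ ^ a) : ∃ m : ℕ, a = m := by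
  by_contra hcon
  push_neg at hcon
  set n := ⌊a⌋₊ with hn
  have hna : (n : ℝ) < a := lt_of_le_of_ne (Nat.floor_le ha) (fun h => hcon n h.symm)
  have han : a < n + 1 := Nat.lt_floor_add_one a
  have hformula : ∀ j : ℕ, ∀ ρ : ℝ, 0 < ρ →
      deriv^[j] f ρ = (∏ i ∈ Finset.range j, (a - i)) * ρ ^ (a - j) := by
    intro j
    induction j with
    | zero => intro ρ hρ; simp [heq ρ hρ.le]
    | succ j ih =>
      intro ρ hρ
      have hev : deriv^[j] f =ᶠ[𝓝 ρ]
          fun x => (∏ i ∈ Finset.range j, (a - i)) * x ^ (a - j) := by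
        filter_upwards [Ioi_mem_nhds hρ] with x hx using ih x hx
      have hd : HasDerivAt (fun x : ℝ => x ^ (a - j)) ((a - j) * ρ ^ (a - j - 1)) ρ :=
        Real.hasDerivAt_rpow_const (Or.inl hρ.ne')
      have hexp : a - ((j : ℕ) + 1 : ℕ) = a - j - 1 := by push_cast; ring
      rw [Function.iterate_succ_apply', hev.deriv_eq,
        deriv_const_mul _ hd.differentiableAt, hd.deriv, Finset.prod_range_succ, hexp]
      ring
  set c := ∏ i ∈ Finset.range n, (a - i) with hc
  have hcpos : 0 < c := Finset.prod_pos (fun i hi => by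
    have hi' : (i : ℝ) < n := by exact_mod_cast Finset.mem_range.mp hi
    linarith)
  set F := deriv^[n] f with hF
  have hFc : ContDiff ℝ (⊤ : ℕ∞) F := hf.iterate_deriv n
  have hFdiff : Differentiable ℝ F := hFc.differentiable (by simp)
  have hbpos : 0 < a - n := by linarith
  have hF0 : F 0 = 0 := by
    have h1 : Tendsto F (𝓝[>] (0 : ℝ)) (𝓝 (F 0)) :=
      (hFdiff.continuous.continuousAt.tendsto).mono_left nhdsWithin_le_nhds
    have h2 : Tendsto F (𝓝[>] (0 : ℝ)) (𝓝 0) := by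
      have h3 : Tendsto (fun x : ℝ => c * x ^ (a - n)) (𝓝[>] (0 : ℝ)) (𝓝 (c * (0 : ℝ) ^ (a - n))) :=
        (((Real.continuousAt_rpow_const 0 (a - n) (Or.inr hbpos.le)).tendsto).mono_left
          nhdsWithin_le_nhds).const_mul c
      rw [Real.zero_rpow hbpos.ne', mul_zero] at h3
      exact h3.congr' (by filter_upwards [self_mem_nhdsWithin] with x hx
        using (hformula n x hx).symm)
    exact tendsto_nhds_unique h1 h2
  have hslope : Tendsto (slope F 0) (𝓝[>] (0 : ℝ)) (𝓝 (deriv F 0)) :=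
    (hasDerivAt_iff_tendsto_slope.mp (hFdiff 0).hasDerivAt).mono_left
      (nhdsWithin_mono 0 (fun x hx => ne_of_gt hx))
  have hslope_eq : (fun x : ℝ => c * x ^ (a - n - 1)) =ᶠ[𝓝[>] (0 : ℝ)] slope F 0 := by
    filter_upwards [self_mem_nhdsWithin] with x hx
    have hx' : (0 : ℝ) < x := hx
    rw [slope_def_field, hF0, show F x = c * x ^ (a - n) from hformula n x hx', sub_zero,
      sub_zero, mul_div_assoc, ← Real.rpow_sub_one hx'.ne']
  have htop : Tendsto (fun x : ℝ => c * x ^ (a - n - 1)) (𝓝[>] (0 : ℝ)) atTop := by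
    have hinv : (fun x : ℝ => x ^ (a - n - 1)) =ᶠ[𝓝[>] (0 : ℝ)]
        fun x => (x ^ (n + 1 - a))⁻¹ := by
      filter_upwards [self_mem_nhdsWithin] with x hx
      have hx' : (0 : ℝ) < x := hx
      rw [show a - n - 1 = -(n + 1 - a) by ring, Real.rpow_neg hx'.le]
    have hto0 : Tendsto (fun x : ℝ => x ^ (n + 1 - a)) (𝓝[>] (0 : ℝ)) (𝓝[>] (0 : ℝ)) := by
      apply tendsto_nhdsWithin_of_tendsto_nhds_of_eventually_within
      · have := ((Real.continuousAt_rpow_const 0 (n + 1 - a)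
          (Or.inr (by linarith))).tendsto).mono_left (nhdsWithin_le_nhds (s := Set.Ioi (0 : ℝ)))
        rwa [Real.zero_rpow (by linarith : (n : ℝ) + 1 - a ≠ 0)] at this
      · filter_upwards [self_mem_nhdsWithin] with x hx
        exact Real.rpow_pos_of_pos hx _
    have h1 : Tendsto (fun x : ℝ => (x ^ ((n : ℝ) + 1 - a))⁻¹) (𝓝[>] (0 : ℝ)) atTop :=
      Tendsto.inv_tendsto_nhdsGT_zero hto0
    have h2 : Tendsto (fun x : ℝ => x ^ (a - n - 1)) (𝓝[>] (0 : ℝ)) atTop := h1.congr' hinv.symm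
    exact h2.const_mul_atTop hcpos
  exact not_tendsto_nhds_of_tendsto_atTop (htop.congr' hslope_eq) _ hslope

/-- The prolonged electromagnetic elementary solutions with angular number `l` are smooth
on the singular cosmic-string differential space — i.e. the angular/radial parts
`exp(ilφ)·ρ^(|l|/k)` and `exp(i(l±1)φ)·ρ^(|1 ± l/k|)` all extend to `C^∞` functions on
`ℝ³` — precisely when `|l|/k ∈ ℕ`. -/
theorem em_prolonged_modes_smooth_iff (k : ℝ) (hk0 : 0 < k) (hk1 : k ≤ 1) (l : ℤ) :
    (∃ H₀ Hp Hm : ℝ × ℝ × ℝ → ℂ,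
        ContDiff ℝ (⊤ : ℕ∞) H₀ ∧ ContDiff ℝ (⊤ : ℕ∞) Hp ∧ ContDiff ℝ (⊤ : ℕ∞) Hm ∧
        ∀ ρ φ : ℝ, 0 ≤ ρ →
          H₀ (ρ * Real.cos φ, ρ * Real.sin φ, ρ) =
            Complex.exp ((l : ℂ) * (φ : ℂ) * Complex.I) * ((ρ ^ (|(l : ℝ)| / k) : ℝ) : ℂ) ∧
          Hp (ρ * Real.cos φ, ρ * Real.sin φ, ρ) =
            Complex.exp (((l : ℂ) + 1) * (φ : ℂ) * Complex.I) *
              ((ρ ^ |1 + (l : ℝ) / k| : ℝ) : ℂ) ∧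
          Hm (ρ * Real.cos φ, ρ * Real.sin φ, ρ) =
            Complex.exp (((l : ℂ) - 1) * (φ : ℂ) * Complex.I) *
              ((ρ ^ |1 - (l : ℝ) / k| : ℝ) : ℂ)) ↔
      ∃ m : ℕ, |(l : ℝ)| / k = (m : ℝ) := by
  constructor
  · rintro ⟨H₀, Hp, Hm, hH₀, hHp, hHm, hval⟩
    have ha : 0 ≤ |(l : ℝ)| / k := div_nonneg (abs_nonneg _) hk0.le
    have hcurve : ContDiff ℝ (⊤ : ℕ∞) (fun ρ : ℝ => ((ρ, (0 : ℝ), ρ) : ℝ × ℝ × ℝ)) :=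
      contDiff_id.prodMk (contDiff_const.prodMk contDiff_id)
    have hg : ContDiff ℝ (⊤ : ℕ∞) (fun ρ : ℝ => (H₀ (ρ, 0, ρ)).re) :=
      (Complex.reCLM.contDiff.comp (hH₀.comp hcurve)).of_le (by simp)
    refine key_nat ha hg (fun ρ hρ => ?_)
    have h := (hval ρ 0 hρ).1
    simp only [Real.cos_zero, Real.sin_zero, mul_one, mul_zero, Complex.ofReal_zero,
      zero_mul, Complex.exp_zero, one_mul] at h
    rw [h, Complex.ofReal_re]
  · rintro ⟨m, hm⟩
    have hkm : |(l : ℝ)| = k * m := by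
      rw [(div_eq_iff hk0.ne').mp hm, mul_comm]
    have hLm : (l.natAbs : ℝ) ≤ (m : ℝ) := by
      have h1 : ((l.natAbs : ℕ) : ℝ) = |(l : ℝ)| := by
        push_cast [Nat.cast_natAbs]
        rfl
      have h2 : k * m ≤ 1 * m := by
        apply mul_le_mul_of_nonneg_right hk1 (Nat.cast_nonneg m)
      rw [h1, hkm]; linarith
    have hLm' : l.natAbs ≤ m := by exact_mod_cast hLm
    rcases lt_trichotomy l 0 with hl | hl | hl
    · -- l < 0
      obtain ⟨L, rfl⟩ := Int.exists_eq_neg_ofNat hl.le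
      have hL1 : 1 ≤ L := by
        rcases Nat.eq_zero_or_pos L with rfl | h
        · simp at hl
        · exact h
      have hLabs : ((-(L : ℤ)).natAbs : ℕ) = L := by simp
      have hLm2 : L ≤ m := by rwa [hLabs] at hLm'
      have hm1 : 1 ≤ m := le_trans hL1 hLm2
      have hlk : ((-(L : ℤ) : ℤ) : ℝ) / k = -(m : ℝ) := by
        have : |((-(L : ℤ) : ℤ) : ℝ)| = (L : ℝ) := by push_cast; simp [abs_neg, Nat.abs_cast]
        rw [this] at hm
        push_cast
        rw [neg_div]
        rw [hm]
      refine ⟨fun v => ((v.1 : ℂ) + (-Complex.I) * (v.2.1 : ℂ)) ^ L * ((v.2.2 : ℂ)) ^ (m - L),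
        fun v => ((v.1 : ℂ) + (-Complex.I) * (v.2.1 : ℂ)) ^ (L - 1) * ((v.2.2 : ℂ)) ^ (m - L),
        fun v => ((v.1 : ℂ) + (-Complex.I) * (v.2.1 : ℂ)) ^ (L + 1) * ((v.2.2 : ℂ)) ^ (m - L),
        cd_aux _ _ _, cd_aux _ _ _, cd_aux _ _ _, fun ρ φ hρ => ⟨?_, ?_, ?_⟩⟩
      · exact goal_minus L (m - L) ρ φ _ _ (by push_cast; ring)
          (by rw [hm]; push_cast [Nat.cast_sub hLm2]; ring)
      · refine goal_minus (L - 1) (m - L) ρ φ _ _ (by push_cast [Nat.cast_sub hL1]; ring) ?_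
        rw [hlk, show (1 : ℝ) + -(m : ℝ) = -((m : ℝ) - 1) by ring, abs_neg,
          _root_.abs_of_nonneg (by
            have hm1' : (1 : ℝ) ≤ (m : ℝ) := by exact_mod_cast hm1
            linarith)]
        push_cast [Nat.cast_sub hLm2, Nat.cast_sub hL1]
        ring
      · refine goal_minus (L + 1) (m - L) ρ φ _ _ (by push_cast; ring) ?_
        rw [hlk, sub_neg_eq_add, _root_.abs_of_nonneg (by positivity)]
        push_cast [Nat.cast_sub hLm2]
        ring
    · -- l = 0
      subst hl
      refine ⟨fun v => ((v.1 : ℂ) + Complex.I * (v.2.1 : ℂ)) ^ 0 * ((v.2.2 : ℂ)) ^ 0,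
        fun v => ((v.1 : ℂ) + Complex.I * (v.2.1 : ℂ)) ^ 1 * ((v.2.2 : ℂ)) ^ 0,
        fun v => ((v.1 : ℂ) + (-Complex.I) * (v.2.1 : ℂ)) ^ 1 * ((v.2.2 : ℂ)) ^ 0,
        cd_aux _ _ _, cd_aux _ _ _, cd_aux _ _ _, fun ρ φ hρ => ⟨?_, ?_, ?_⟩⟩
      · exact goal_plus 0 0 ρ φ _ _ (by push_cast; ring) (by norm_num)
      · exact goal_plus 1 0 ρ φ _ _ (by push_cast; ring) (by norm_num)
      · exact goal_minus 1 0 ρ φ _ _ (by push_cast; ring) (by norm_num)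
    · -- l > 0
      obtain ⟨L, rfl⟩ := Int.eq_ofNat_of_zero_le hl.le
      have hL1 : 1 ≤ L := by exact_mod_cast hl
      have hLabs : (((L : ℤ)).natAbs : ℕ) = L := by simp
      have hLm2 : L ≤ m := by rwa [hLabs] at hLm'
      have hm1 : 1 ≤ m := le_trans hL1 hLm2
      have hlk : (((L : ℤ) : ℤ) : ℝ) / k = (m : ℝ) := by
        have : |(((L : ℤ) : ℤ) : ℝ)| = (L : ℝ) := by push_cast; simp [Nat.abs_cast]
        rw [this] at hm
        push_cast
        rw [hm]
      refine ⟨fun v => ((v.1 : ℂ) + Complex.I * (v.2.1 : ℂ)) ^ L * ((v.2.2 : ℂ)) ^ (m - L),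
        fun v => ((v.1 : ℂ) + Complex.I * (v.2.1 : ℂ)) ^ (L + 1) * ((v.2.2 : ℂ)) ^ (m - L),
        fun v => ((v.1 : ℂ) + Complex.I * (v.2.1 : ℂ)) ^ (L - 1) * ((v.2.2 : ℂ)) ^ (m - L),
        cd_aux _ _ _, cd_aux _ _ _, cd_aux _ _ _, fun ρ φ hρ => ⟨?_, ?_, ?_⟩⟩
      · exact goal_plus L (m - L) ρ φ _ _ (by push_cast; ring)
          (by rw [hm]; push_cast [Nat.cast_sub hLm2]; ring)
      · refine goal_plus (L + 1) (m - L) ρ φ _ _ (by push_cast; ring) ?_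
        rw [hlk, _root_.abs_of_nonneg (by positivity)]
        push_cast [Nat.cast_sub hLm2]
        ring
      · refine goal_plus (L - 1) (m - L) ρ φ _ _ (by push_cast [Nat.cast_sub hL1]; ring) ?_
        have hm1' : (1 : ℝ) ≤ (m : ℝ) := by exact_mod_cast hm1
        rw [hlk, _root_.abs_of_nonpos (by linarith)]
        push_cast [Nat.cast_sub hLm2, Nat.cast_sub hL1]
        ring
end

section
/- Let k ∈ (0,1]. There exists a C^∞ function h : ℝ³ → ℝ such that h(ρ·cos φ, ρ·sin φ, ρ) = ρ^(1/k) for all ρ ≥ 0 and all φ ∈ ℝ, if and only if there exists n ∈ ℕ, n ≥ 1, with k = 1/n. (This is the core of the statements that the auxiliary generator β• given by β•(p) = ρ^(1/k) belongs to the differential structure of the singular cosmic-string d-space for k = 1/n, while for k ≠ 1/n the set of generators {α•₀,…,α•₄, β•} is differentially independent at the singular boundary points.) -/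
open Real Filter
open scoped ContDiff

private lemma rpow_tendsto_atTop_zero {c : ℝ} (hc : c < 0) :
    Tendsto (fun t : ℝ => t ^ c) (nhdsWithin 0 (Set.Ioi 0)) atTop := by
  have h1 : Tendsto (fun t : ℝ => (t⁻¹) ^ (-c)) (nhdsWithin 0 (Set.Ioi 0)) atTop :=
    (tendsto_rpow_atTop (by linarith)).comp tendsto_inv_nhdsGT_zero
  refine h1.congr' ?_
  filter_upwards [self_mem_nhdsWithin] with t (ht : 0 < t)
  rw [Real.inv_rpow ht.le, ← Real.rpow_neg ht.le, neg_neg]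

/-- If `t ↦ t ^ a` on `[0, ∞)` extends to a smooth function on `ℝ`, then `a` is a
natural number. -/
private lemma rpow_ext_nat_s7 : ∀ N : ℕ, ∀ a : ℝ, 0 < a → a ≤ N →
    (∃ g : ℝ → ℝ, ContDiff ℝ ∞ g ∧ ∀ t : ℝ, 0 ≤ t → g t = t ^ a) →
    ∃ n : ℕ, a = n := by
  intro N
  induction N with
  | zero => intro a ha haN _; exact absurd (ha.trans_le haN) (by norm_num)
  | succ N ih =>
    rintro a ha haN ⟨g, hg, hge⟩
    rcases lt_trichotomy a 1 with h1 | h1 | h1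
    · -- `0 < a < 1`: contradiction with differentiability at `0`.
      exfalso
      have hd : HasDerivAt g (deriv g 0) 0 :=
        ((hg.differentiable (by norm_num)) 0).hasDerivAt
      have hslope : Tendsto (slope g 0) (nhdsWithin 0 (Set.Ioi 0)) (nhds (deriv g 0)) :=
        (hasDerivAt_iff_tendsto_slope.mp hd).mono_left
          (nhdsWithin_mono _ (by intro x hx; exact ne_of_gt hx))
      have hEq : Tendsto (fun t : ℝ => t ^ (a - 1)) (nhdsWithin 0 (Set.Ioi 0))
          (nhds (deriv g 0)) := by
        refine hslope.congr' ?_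
        filter_upwards [self_mem_nhdsWithin] with t (ht : 0 < t)
        rw [slope_def_field, hge t ht.le, hge 0 le_rfl, Real.zero_rpow ha.ne', sub_zero,
          sub_zero, div_eq_mul_inv, ← Real.rpow_neg_one t, ← Real.rpow_add ht, ← sub_eq_add_neg]
      exact not_tendsto_nhds_of_tendsto_atTop (rpow_tendsto_atTop_zero (by linarith)) _ hEq
    · exact ⟨1, by simp [h1]⟩
    · -- `a > 1`: differentiate and apply the induction hypothesis.
      have hgd : ContDiff ℝ ∞ (deriv g) := (contDiff_infty_iff_deriv.mp hg).2
      set g₁ : ℝ → ℝ := fun t => deriv g t / a with hg₁def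
      have hg₁ : ContDiff ℝ ∞ g₁ := hgd.div_const a
      have hpos : ∀ t : ℝ, 0 < t → g₁ t = t ^ (a - 1) := by
        intro t ht
        have hev : g =ᶠ[nhds t] fun s => s ^ a := by
          filter_upwards [Ioi_mem_nhds ht] with s (hs : 0 < s)
          exact hge s hs.le
        have : deriv g t = a * t ^ (a - 1) := by
          rw [hev.deriv_eq, Real.deriv_rpow_const t a]
        rw [hg₁def]; simp only [this]
        field_simp
      have h0 : g₁ 0 = 0 := by
        have hc : Tendsto g₁ (nhdsWithin 0 (Set.Ioi 0)) (nhds (g₁ 0)) :=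
          (hg₁.continuous.tendsto 0).mono_left nhdsWithin_le_nhds
        have hc2 : Tendsto g₁ (nhdsWithin 0 (Set.Ioi 0)) (nhds 0) := by
          have : Tendsto (fun t : ℝ => t ^ (a - 1)) (nhdsWithin 0 (Set.Ioi 0)) (nhds 0) := by
            have := (Real.continuousAt_rpow_const 0 (a - 1)
              (Or.inr (by linarith))).tendsto
            rw [Real.zero_rpow (by intro h; linarith [sub_eq_zero.mp h])] at this
            exact this.mono_left nhdsWithin_le_nhds
          refine this.congr' ?_
          filter_upwards [self_mem_nhdsWithin] with t (ht : 0 < t)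
          exact (hpos t ht).symm
        exact tendsto_nhds_unique hc hc2
      have hIH : ∃ n : ℕ, a - 1 = n := by
        refine ih (a - 1) (by linarith) (by push_cast at haN ⊢; linarith) ⟨g₁, hg₁, ?_⟩
        intro t ht
        rcases ht.eq_or_lt with rfl | ht'
        · rw [h0, Real.zero_rpow (by intro h; linarith [sub_eq_zero.mp h])]
        · exact hpos t ht'
      obtain ⟨m, hm⟩ := hIH
      exact ⟨m + 1, by push_cast; linarith⟩

/-- The auxiliary generator `β•`, given on the cone `{(ρcosφ, ρsinφ, ρ)} ⊂ ℝ³` by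
`ρ^(1/k)`, extends to a `C^∞` function on all of `ℝ³` (i.e. belongs to the differential
structure of the singular cosmic-string d-space) exactly when `k = 1/n` for some
`n = 1, 2, …`. -/
theorem beta_generator_smooth_iff (k : ℝ) (hk0 : 0 < k) (hk1 : k ≤ 1) :
    (∃ h : ℝ × ℝ × ℝ → ℝ, ContDiff ℝ (⊤ : ℕ∞) h ∧
        ∀ ρ φ : ℝ, 0 ≤ ρ →
          h (ρ * Real.cos φ, ρ * Real.sin φ, ρ) = ρ ^ (1 / k)) ↔
      ∃ n : ℕ, 1 ≤ n ∧ k = 1 / (n : ℝ) := by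
  constructor
  · rintro ⟨h, hh, heq⟩
    set a : ℝ := 1 / k with ha_def
    have ha : 0 < a := by positivity
    have hg : ∃ g : ℝ → ℝ, ContDiff ℝ ∞ g ∧ ∀ t : ℝ, 0 ≤ t → g t = t ^ a := by
      refine ⟨fun t => h (t, 0, t), (hh.of_le (by simp)).comp (contDiff_id.prodMk
        (contDiff_const.prodMk contDiff_id)), fun t ht => ?_⟩
      have := heq t 0 ht
      simpa using this
    obtain ⟨n, hn⟩ := rpow_ext_nat_s7 ⌈a⌉₊ a ha (Nat.le_ceil a) hg
    have hn1 : 1 ≤ n := by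
      by_contra hc
      push_neg at hc
      interval_cases n
      · rw [hn] at ha; norm_num at ha
    refine ⟨n, hn1, ?_⟩
    have hne : (n : ℝ) ≠ 0 := by positivity
    rw [ha_def] at hn
    field_simp at hn ⊢
    linarith [hn]
  · rintro ⟨n, hn1, rfl⟩
    have hne : (n : ℝ) ≠ 0 := by positivity
    refine ⟨fun p => p.2.2 ^ n, (contDiff_snd.snd).pow n, fun ρ φ hρ => ?_⟩
    simp only
    rw [one_div_one_div, ← Real.rpow_natCast ρ n]
end

section
/- Let a ∈ ℝ with a ≥ 0 and let F : ℝ → ℂ be a C^∞ function with F(0) ≠ 0. There exists a C^∞ function g : ℝ → ℂ such that g(x) = x^a · F(x) for all x ≥ 0, if and only if there exists m ∈ ℕ with a = m. -/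
open Real Complex Filter

-- slope limit lemma: if g is differentiable at 0 and g x = x^a F x for x ≥ 0 with a > 0,
-- then x^(a-1) * F x tends to deriv g 0 along 𝓝[>] 0.
lemma slope_limit (a : ℝ) (ha : 0 < a) (F g : ℝ → ℂ)
    (hg : DifferentiableAt ℝ g 0)
    (heq : ∀ x : ℝ, 0 ≤ x → g x = ((x ^ a : ℝ) : ℂ) * F x) :
    Tendsto (fun x : ℝ => ((x ^ (a - 1) : ℝ) : ℂ) * F x) (nhdsWithin 0 (Set.Ioi 0))
      (nhds (deriv g 0)) := by
  have hg0 : g 0 = 0 := by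
    rw [heq 0 le_rfl, Real.zero_rpow ha.ne']
    simp
  have hslope : Tendsto (slope g 0) (nhdsWithin 0 {0}ᶜ) (nhds (deriv g 0)) :=
    hasDerivAt_iff_tendsto_slope.1 hg.hasDerivAt
  have h2 : Tendsto (slope g 0) (nhdsWithin 0 (Set.Ioi 0)) (nhds (deriv g 0)) :=
    hslope.mono_left (nhdsWithin_mono 0 (fun x hx => ne_of_gt hx))
  refine h2.congr' ?_
  filter_upwards [self_mem_nhdsWithin] with x (hx : 0 < x)
  have : slope g 0 x = (x⁻¹ : ℝ) • ((x ^ a : ℝ) : ℂ) * F x := by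
    simp [slope, hg0, heq x hx.le, smul_mul_assoc, mul_assoc]
  rw [this, Complex.real_smul]
  push_cast
  congr 1
  norm_cast
  rw [Real.rpow_sub hx, Real.rpow_one, div_eq_inv_mul]

lemma key_lemma : ∀ n : ℕ, ∀ a : ℝ, 0 ≤ a → a ≤ n → ∀ F g : ℝ → ℂ,
    ContDiff ℝ (⊤ : ℕ∞) F → F 0 ≠ 0 → ContDiff ℝ (⊤ : ℕ∞) g →
    (∀ x : ℝ, 0 ≤ x → g x = ((x ^ a : ℝ) : ℂ) * F x) → ∃ m : ℕ, a = m := by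
  intro n
  induction n with
  | zero => intro a ha0 ha1 F g _ _ _ _; exact ⟨0, le_antisymm (by exact_mod_cast ha1) ha0 ▸ by simp⟩
  | succ n ih =>
    intro a ha0 ha1 F g hF hF0 hg heq
    rcases eq_or_lt_of_le ha0 with h0 | h0
    · exact ⟨0, by simp [← h0]⟩
    rcases eq_or_ne a 1 with h1 | h1
    · exact ⟨1, by simp [h1]⟩
    have hslope := slope_limit a h0 F g ((hg.differentiable (by simp)).differentiableAt) heq
    have hFlim : Tendsto F (nhdsWithin 0 (Set.Ioi 0)) (nhds (F 0)) :=
      ((hF.continuous.tendsto 0)).mono_left nhdsWithin_le_nhds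
    rcases lt_or_gt_of_ne h1 with hlt | hgt
    · -- 0 < a < 1 : contradiction, the limit blows up
      exfalso
      have hpow : Tendsto (fun x : ℝ => x ^ (a - 1)) (nhdsWithin 0 (Set.Ioi 0)) atTop := by
        have h1a : (0:ℝ) < 1 - a := by linarith
        have t0 : Tendsto (fun x : ℝ => x ^ (1 - a)) (nhdsWithin 0 (Set.Ioi 0))
            (nhdsWithin 0 (Set.Ioi 0)) := by
          rw [tendsto_nhdsWithin_iff]
          constructor
          · have : ContinuousAt (fun x : ℝ => x ^ (1 - a)) 0 :=
              Real.continuousAt_rpow_const 0 (1 - a) (Or.inr h1a.le)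
            simpa [Real.zero_rpow h1a.ne'] using
              this.tendsto.mono_left (nhdsWithin_le_nhds (s := Set.Ioi 0))
          · filter_upwards [self_mem_nhdsWithin] with x (hx : 0 < x)
            exact Real.rpow_pos_of_pos hx _
        have := t0.inv_tendsto_nhdsGT_zero
        refine this.congr' ?_
        filter_upwards [self_mem_nhdsWithin] with x (hx : 0 < x)
        simp only [Pi.inv_apply]
        rw [← Real.rpow_neg hx.le]
        ring_nf
      have hnorm : Tendsto (fun x : ℝ => ‖((x ^ (a - 1) : ℝ) : ℂ) * F x‖)
          (nhdsWithin 0 (Set.Ioi 0)) atTop := by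
        have hmul := hpow.atTop_mul_pos (by simpa using hF0) (hFlim.norm)
        refine hmul.congr' ?_
        filter_upwards [self_mem_nhdsWithin] with x (hx : 0 < x)
        rw [norm_mul, Complex.norm_real, Real.norm_eq_abs,
          _root_.abs_of_nonneg (Real.rpow_nonneg hx.le _)]
      exact not_tendsto_atTop_of_tendsto_nhds hslope.norm hnorm
    · -- a > 1 : reduce to a - 1 via the derivative
      set F₁ : ℝ → ℂ := fun x => (a : ℂ) * F x + (x : ℂ) * deriv F x with hF₁def
      have hdF : ContDiff ℝ (⊤ : ℕ∞) (deriv F) := (contDiff_infty_iff_deriv.mp hF).2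
      have hF₁ : ContDiff ℝ (⊤ : ℕ∞) F₁ :=
        (contDiff_const.mul hF).add ((Complex.ofRealCLM.contDiff).mul hdF)
      have hF₁0 : F₁ 0 ≠ 0 := by
        simp only [hF₁def, Complex.ofReal_zero, zero_mul, add_zero]
        exact mul_ne_zero (by exact_mod_cast h0.ne') hF0
      have hg₁ : ContDiff ℝ (⊤ : ℕ∞) (deriv g) := (contDiff_infty_iff_deriv.mp hg).2
      have ham : (0:ℝ) < a - 1 := by linarith
      have heq₁ : ∀ x : ℝ, 0 ≤ x → deriv g x = ((x ^ (a - 1) : ℝ) : ℂ) * F₁ x := by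
        intro x hx
        rcases eq_or_lt_of_le hx with rfl | hx
        · -- deriv g 0 = 0
          have hlim0 : Tendsto (fun x : ℝ => ((x ^ (a - 1) : ℝ) : ℂ) * F x)
              (nhdsWithin 0 (Set.Ioi 0)) (nhds 0) := by
            have hc : ContinuousAt (fun x : ℝ => x ^ (a - 1)) 0 :=
              Real.continuousAt_rpow_const 0 (a - 1) (Or.inr ham.le)
            have : Tendsto (fun x : ℝ => ((x ^ (a - 1) : ℝ) : ℂ))
                (nhdsWithin 0 (Set.Ioi 0)) (nhds 0) := by
              have := (Complex.continuous_ofReal.tendsto _).comp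
                (hc.tendsto.mono_left (nhdsWithin_le_nhds (s := Set.Ioi 0)))
              simpa [Real.zero_rpow ham.ne', Function.comp_def] using this
            simpa using this.mul hFlim
          have : deriv g 0 = 0 := tendsto_nhds_unique hslope hlim0
          rw [this, Real.zero_rpow ham.ne']
          simp
        · -- x > 0
          have hmem : Set.Ioi (0:ℝ) ∈ nhds x := isOpen_Ioi.mem_nhds hx
          have hev : g =ᶠ[nhds x] fun y => ((y ^ a : ℝ) : ℂ) * F y := by
            filter_upwards [hmem] with y (hy : 0 < y)
            exact heq y hy.le
          have hrpow : HasDerivAt (fun y : ℝ => y ^ a) (a * x ^ (a - 1)) x :=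
            Real.hasDerivAt_rpow_const (Or.inl hx.ne')
          have hprod : HasDerivAt (fun y : ℝ => ((y ^ a : ℝ) : ℂ) * F y)
              (((a * x ^ (a - 1) : ℝ) : ℂ) * F x + ((x ^ a : ℝ) : ℂ) * deriv F x) x :=
            (hrpow.ofReal_comp).mul ((hF.differentiable (by simp) x).hasDerivAt)
          have hgd : HasDerivAt g
              (((a * x ^ (a - 1) : ℝ) : ℂ) * F x + ((x ^ a : ℝ) : ℂ) * deriv F x) x :=
            hprod.congr_of_eventuallyEq hev
          rw [hgd.deriv, hF₁def]
          have hxa : (x : ℝ) ^ a = x ^ (a - 1) * x := by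
            rw [← Real.rpow_add_one hx.ne' (a - 1)]; ring_nf
          rw [hxa]
          push_cast
          ring
      obtain ⟨m, hm⟩ := ih (a - 1) ham.le (by push_cast at ha1; linarith) F₁ (deriv g)
        hF₁ hF₁0 hg₁ heq₁
      exact ⟨m + 1, by push_cast; linarith⟩

/-- For a `C^∞` profile `F : ℝ → ℂ` with `F 0 ≠ 0`, the function `x ^ a · F x` on `[0, ∞)`
(real power `Real.rpow`) admits a `C^∞` extension through `0` exactly when the exponent
`a ≥ 0` is a natural number. -/
theorem rpow_mul_profile_smooth_extension_iff_nat (a : ℝ) (ha : 0 ≤ a)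
    (F : ℝ → ℂ) (hF : ContDiff ℝ (⊤ : ℕ∞) F) (hF0 : F 0 ≠ 0) :
    (∃ g : ℝ → ℂ, ContDiff ℝ (⊤ : ℕ∞) g ∧ ∀ x : ℝ, 0 ≤ x → g x = ((x ^ a : ℝ) : ℂ) * F x) ↔
      ∃ m : ℕ, a = (m : ℝ) := by
  constructor
  · rintro ⟨g, hg, heq⟩
    exact key_lemma ⌈a⌉₊ a ha (Nat.le_ceil a) F g (hF.of_le (by simp)) hF0 (hg.of_le (by simp)) heq
  · rintro ⟨m, rfl⟩
    refine ⟨fun x => ((x ^ m : ℝ) : ℂ) * F x, ?_, fun x hx => by rw [Real.rpow_natCast]⟩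
    exact (Complex.ofRealCLM.contDiff.comp (contDiff_id.pow m)).mul hF
end

section
/- Let k ∈ (0,1]. Then (for every l ∈ ℤ there exist m, m' ∈ ℕ with |1 + l/k| = |l+1| + m and |1 − l/k| = |l−1| + m') if and only if there exists n ∈ ℕ, n ≥ 1, with k = 1/n. -/
/-!
Taking `l = 1` gives `1 + 1/k = 2 + m`, so `1/k = m + 1` is a positive integer. Conversely, if
`1/k = n` then the radial exponents are `|1 ± l n|`: integers of the same sign as `l ± 1` and at
least as large in absolute value, so they differ from `|l ± 1|` by natural numbers.
-/

lemma abs_add_one_le_abs_one_add_mul (l : ℤ) {n : ℤ} (hn : 1 ≤ n) : |l + 1| ≤ |1 + l * n| := by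
  rcases le_or_gt 0 l with hl | hl
  · rw [abs_of_nonneg (by omega), abs_of_nonneg (by nlinarith)]
    nlinarith
  · rw [abs_of_nonpos (by omega), abs_of_nonpos (by nlinarith)]
    nlinarith

lemma exists_nat_abs_one_add_mul_eq (l : ℤ) {n : ℤ} (hn : 1 ≤ n) :
    ∃ m : ℕ, |1 + (l : ℝ) * n| = |(l : ℝ) + 1| + m := by
  obtain ⟨m, hm⟩ := Int.le.dest (abs_add_one_le_abs_one_add_mul l hn)
  exact ⟨m, by exact_mod_cast hm.symm⟩

lemma eq_one_div_succ_of_abs_one_add_inv {k : ℝ} (hk : 0 < k) {m : ℕ}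
    (h : |1 + 1 / k| = |1 + 1| + m) : k = 1 / (m + 1 : ℕ) := by
  have hk_inv : 1 / k = m + 1 := by
    rw [abs_of_pos (by positivity), abs_of_pos (by norm_num)] at h
    linarith
  rw [Nat.cast_succ, ← hk_inv, one_div_one_div]

theorem em_modes_exponent_condition_iff_k_inv_nat_general (k : ℝ) (hk0 : 0 < k) :
    (∀ l : ℤ, ∃ m m' : ℕ,
        |1 + (l : ℝ) / k| = |(l : ℝ) + 1| + (m : ℝ) ∧
        |1 - (l : ℝ) / k| = |(l : ℝ) - 1| + (m' : ℝ)) ↔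
      ∃ n : ℕ, 1 ≤ n ∧ k = 1 / (n : ℝ) := by
  constructor
  · intro h
    obtain ⟨m, -, h_one, -⟩ := h 1
    push_cast at h_one
    exact ⟨m + 1, by omega, eq_one_div_succ_of_abs_one_add_inv hk0 h_one⟩
  · rintro ⟨n, hn, rfl⟩ l
    have hn' : (1 : ℤ) ≤ n := by exact_mod_cast hn
    obtain ⟨m, hm⟩ := exists_nat_abs_one_add_mul_eq l hn'
    obtain ⟨m', hm'⟩ := exists_nat_abs_one_add_mul_eq (-l) hn'
    push_cast at hm hm'
    refine ⟨m, m', ?_, ?_⟩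
    · rwa [one_div, div_inv_eq_mul]
    · rw [one_div, div_inv_eq_mul, ← abs_neg ((l : ℝ) - 1), neg_sub', sub_neg_eq_add]
      convert hm' using 3
      ring

/-- For a metric parameter `k ∈ (0,1]`, the condition that for every integer `l` the
electromagnetic radial exponents `|1 ± l/k|` exceed the angular numbers `|l ± 1|` by
natural numbers holds exactly for `k = 1/n`, `n = 1, 2, …`. -/
theorem em_modes_exponent_condition_iff_k_inv_nat (k : ℝ) (hk0 : 0 < k) (hk1 : k ≤ 1) :
    (∀ l : ℤ, ∃ m m' : ℕ,
        |1 + (l : ℝ) / k| = |(l : ℝ) + 1| + (m : ℝ) ∧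
        |1 - (l : ℝ) / k| = |(l : ℝ) - 1| + (m' : ℝ)) ↔
      ∃ n : ℕ, 1 ≤ n ∧ k = 1 / (n : ℝ) :=
  em_modes_exponent_condition_iff_k_inv_nat_general k hk0
end
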